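/- Let d ≥ 1 be an integer and ε_des > 0. Suppose B₀ is a nonzero real matrix and for each i = 1,…,d we are given a Frobenius-norm-preserving linear bijection ρᵢ (a reshaping) defined on the space containing B_{i-1}, a real matrix Uᵢ with orthonormal columns, and real matrices Bᵢ, Eᵢ such that ρᵢ(B_{i-1}) = Uᵢ Bᵢ + Eᵢ, Uᵢᵀ Eᵢ = 0, and ‖Eᵢ‖_F ≤ ε_des · ‖B₀‖_F / √d. Define B̂_d := B_d and B̂_{i-1} := ρᵢ⁻¹(Uᵢ B̂ᵢ) for i = d,…,1. Then ‖B₀ − B̂₀‖_F / ‖B₀‖_F ≤ ε_des. -/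

import Mathlib

open Matrix

/-!
Each reshaping is an isometry, so `ρᵢ(B_{i-1} - B̂_{i-1}) = Uᵢ (Bᵢ - B̂ᵢ) + Eᵢ` has the same
Frobenius norm as `B_{i-1} - B̂_{i-1}`, and since `Uᵢ` is an isometry whose range is orthogonal
to `Eᵢ`, Pythagoras gives `‖B_{i-1} - B̂_{i-1}‖² = ‖Bᵢ - B̂ᵢ‖² + ‖Eᵢ‖²`. Telescoping from
`B̂_d = B_d` yields `‖B₀ - B̂₀‖² = ∑ᵢ ‖Eᵢ‖² ≤ d · (ε_des ‖B₀‖ / √d)² = (ε_des ‖B₀‖)²`.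
-/

/-- Frobenius norm of a real matrix: `‖A‖_F = √(∑ᵢⱼ Aᵢⱼ²)`. -/
noncomputable def frobNorm {m n : Type*} [Fintype m] [Fintype n] (A : Matrix m n ℝ) : ℝ :=
  Real.sqrt (∑ i, ∑ j, (A i j) ^ 2)

theorem Fin.apply_zero_eq_apply_last_add_sum {M : Type*} [AddCommMonoid M] :
    ∀ {d : ℕ} (f : Fin (d + 1) → M) (g : Fin d → M),
      (∀ i, f i.castSucc = f i.succ + g i) → f 0 = f (Fin.last d) + ∑ i, g i
  | 0, f, _, _ => by simp [Fin.last]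
  | d + 1, f, g, h => by
    have htail := Fin.apply_zero_eq_apply_last_add_sum (f ∘ Fin.succ) (g ∘ Fin.succ)
      fun i => h i.succ
    rw [Fin.sum_univ_succ, ← Fin.castSucc_zero, h 0, add_left_comm, add_comm (g 0)]
    simpa using congrArg (· + g 0) htail

section FrobeniusNorm

variable {m n p q r : Type*} [Fintype m] [Fintype n] [Fintype p] [Fintype q] [Fintype r]

@[simp]
lemma frobNorm_zero : frobNorm (0 : Matrix m n ℝ) = 0 := by
  simp [frobNorm]

lemma frobNorm_nonneg (A : Matrix m n ℝ) : 0 ≤ frobNorm A :=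
  Real.sqrt_nonneg _

lemma frobNorm_sq (A : Matrix m n ℝ) : frobNorm A ^ 2 = trace (Aᵀ * A) := by
  rw [frobNorm, Real.sq_sqrt (by positivity), Finset.sum_comm]
  simp only [trace, diag, mul_apply, transpose_apply, sq]

lemma frobNorm_mul_add_sq [DecidableEq m] {U : Matrix p m ℝ} {E : Matrix p n ℝ}
    (hU : Uᵀ * U = 1) (hE : Uᵀ * E = 0) (X : Matrix m n ℝ) :
    frobNorm (U * X + E) ^ 2 = frobNorm X ^ 2 + frobNorm E ^ 2 := by
  have hEU : Eᵀ * U = 0 := by simpa using congrArg transpose hE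
  have hsquare : Xᵀ * Uᵀ * (U * X) = Xᵀ * X := by
    rw [Matrix.mul_assoc, ← Matrix.mul_assoc Uᵀ, hU, Matrix.one_mul]
  have hcross : Xᵀ * Uᵀ * E = 0 := by rw [Matrix.mul_assoc, hE, Matrix.mul_zero]
  have hcross' : Eᵀ * (U * X) = 0 := by rw [← Matrix.mul_assoc, hEU, Matrix.zero_mul]
  simp only [frobNorm_sq, transpose_add, transpose_mul, Matrix.add_mul, Matrix.mul_add,
    hsquare, hcross, hcross', add_zero, zero_add, trace_add]

lemma frobNorm_sub_symm_mul_sq [DecidableEq r]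
    (ρ : Matrix m n ℝ ≃ₗ[ℝ] Matrix p q ℝ) (hρ : ∀ X, frobNorm (ρ X) = frobNorm X)
    {U : Matrix p r ℝ} {E : Matrix p q ℝ} (hU : Uᵀ * U = 1) (hE : Uᵀ * E = 0)
    {B : Matrix m n ℝ} {B' : Matrix r q ℝ} (hsplit : ρ B = U * B' + E) (Bh' : Matrix r q ℝ) :
    frobNorm (B - ρ.symm (U * Bh')) ^ 2 = frobNorm (B' - Bh') ^ 2 + frobNorm E ^ 2 := by
  have hsub : ρ (B - ρ.symm (U * Bh')) = U * (B' - Bh') + E := by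
    rw [map_sub, hsplit, LinearEquiv.apply_symm_apply, Matrix.mul_sub]
    abel
  rw [← hρ, hsub, frobNorm_mul_add_sq hU hE]

end FrobeniusNorm

theorem tt_ice_relative_error_bound_general
    (d : ℕ) (hd : 1 ≤ d) (εdes : ℝ) (hεdes : 0 < εdes)
    (m n : Fin (d + 1) → Type) (p : Fin d → Type)
    [∀ i, Fintype (m i)] [∀ i, DecidableEq (m i)]
    [∀ i, Fintype (n i)] [∀ i, Fintype (p i)]
    (B Bh : ∀ i, Matrix (m i) (n i) ℝ)
    (ρ : ∀ i : Fin d, Matrix (m i.castSucc) (n i.castSucc) ℝ ≃ₗ[ℝ] Matrix (p i) (n i.succ) ℝ)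
    (hρ : ∀ (i : Fin d) (X : Matrix (m i.castSucc) (n i.castSucc) ℝ),
      frobNorm (ρ i X) = frobNorm X)
    (U : ∀ i : Fin d, Matrix (p i) (m i.succ) ℝ)
    (hU : ∀ i : Fin d, (U i)ᵀ * U i = 1)
    (E : ∀ i : Fin d, Matrix (p i) (n i.succ) ℝ)
    (hsplit : ∀ i : Fin d, ρ i (B i.castSucc) = U i * B i.succ + E i)
    (horth : ∀ i : Fin d, (U i)ᵀ * E i = 0)
    (hE : ∀ i : Fin d, frobNorm (E i) ≤ εdes * frobNorm (B 0) / Real.sqrt d)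
    (hlast : Bh (Fin.last d) = B (Fin.last d))
    (hrec : ∀ i : Fin d, Bh i.castSucc = (ρ i).symm (U i * Bh i.succ)) :
    frobNorm (B 0 - Bh 0) / frobNorm (B 0) ≤ εdes := by
  set N := frobNorm (B 0)
  have hstep : ∀ i : Fin d, frobNorm (B i.castSucc - Bh i.castSucc) ^ 2 =
      frobNorm (B i.succ - Bh i.succ) ^ 2 + frobNorm (E i) ^ 2 := fun i => by
    rw [hrec i]
    exact frobNorm_sub_symm_mul_sq (ρ i) (hρ i) (hU i) (horth i) (hsplit i) _
  have herr : frobNorm (B 0 - Bh 0) ^ 2 = ∑ i, frobNorm (E i) ^ 2 := by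
    have := Fin.apply_zero_eq_apply_last_add_sum (fun i => frobNorm (B i - Bh i) ^ 2) _ hstep
    rwa [hlast, sub_self, frobNorm_zero, zero_pow two_ne_zero, zero_add] at this
  have hsum : ∑ i, frobNorm (E i) ^ 2 ≤ (εdes * N) ^ 2 := calc
    ∑ i, frobNorm (E i) ^ 2 ≤ ∑ _i : Fin d, (εdes * N / Real.sqrt d) ^ 2 :=
      Finset.sum_le_sum fun i _ => pow_le_pow_left₀ (frobNorm_nonneg _) (hE i) 2
    _ = (εdes * N) ^ 2 := by
      have hd' : (d : ℝ) ≠ 0 := Nat.cast_ne_zero.mpr (by omega)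
      rw [Finset.sum_const, Finset.card_univ, Fintype.card_fin, nsmul_eq_mul, div_pow,
        Real.sq_sqrt (Nat.cast_nonneg d), mul_div_cancel₀ _ hd']
  have hnorm : frobNorm (B 0 - Bh 0) ≤ εdes * N :=
    (pow_le_pow_iff_left₀ (frobNorm_nonneg _) (mul_nonneg hεdes.le (frobNorm_nonneg _))
      two_ne_zero).mp (herr ▸ hsum)
  exact div_le_of_le_mul₀ (frobNorm_nonneg _) hεdes.le hnorm

/-- **TT-ICE relative error bound (Corollary 3.2).**  If every truncation error in the
sequential orthogonal splits `ρᵢ(B_{i-1}) = Uᵢ Bᵢ + Eᵢ` satisfies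
`‖Eᵢ‖_F ≤ ε_des ‖B₀‖_F / √d`, then the backwards-reconstructed approximation `B̂₀`
(with `B̂_d = B_d`, `B̂_{i-1} = ρᵢ⁻¹(Uᵢ B̂ᵢ)`) satisfies
`‖B₀ − B̂₀‖_F / ‖B₀‖_F ≤ ε_des`. -/
theorem tt_ice_relative_error_bound
    (d : ℕ) (hd : 1 ≤ d) (εdes : ℝ) (hεdes : 0 < εdes)
    (m n : Fin (d + 1) → Type) (p : Fin d → Type)
    [∀ i, Fintype (m i)] [∀ i, DecidableEq (m i)]
    [∀ i, Fintype (n i)] [∀ i, Fintype (p i)]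
    (B Bh : ∀ i, Matrix (m i) (n i) ℝ)
    (hB0 : B 0 ≠ 0)
    (ρ : ∀ i : Fin d, Matrix (m i.castSucc) (n i.castSucc) ℝ ≃ₗ[ℝ] Matrix (p i) (n i.succ) ℝ)
    (hρ : ∀ (i : Fin d) (X : Matrix (m i.castSucc) (n i.castSucc) ℝ),
      frobNorm (ρ i X) = frobNorm X)
    (U : ∀ i : Fin d, Matrix (p i) (m i.succ) ℝ)
    (hU : ∀ i : Fin d, (U i)ᵀ * U i = 1)
    (E : ∀ i : Fin d, Matrix (p i) (n i.succ) ℝ)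
    (hsplit : ∀ i : Fin d, ρ i (B i.castSucc) = U i * B i.succ + E i)
    (horth : ∀ i : Fin d, (U i)ᵀ * E i = 0)
    (hE : ∀ i : Fin d, frobNorm (E i) ≤ εdes * frobNorm (B 0) / Real.sqrt d)
    (hlast : Bh (Fin.last d) = B (Fin.last d))
    (hrec : ∀ i : Fin d, Bh i.castSucc = (ρ i).symm (U i * Bh i.succ)) :
    frobNorm (B 0 - Bh 0) / frobNorm (B 0) ≤ εdes :=
  tt_ice_relative_error_bound_general d hd εdes hεdes m n p B Bh ρ hρ U hU E hsplit horth hE hlast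
    hrec
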